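/- Let σ_{a,b} = Σ_w q^{ℓ(w_{a,b}) − ℓ(w)} H_w, summed over minimal-length coset representatives w of 𝔖_{a+b}/(𝔖_a × 𝔖_b), where w_{a,b} is the longest such representative. Then under the polynomial representation of the Hecke algebra, σ_{a,b} maps the subring of 𝔖_a × 𝔖_b-invariant Laurent polynomials in X_1,…,X_{a+b} into the subring of 𝔖_{a+b}-invariant Laurent polynomials. -/

import Mathlib

open LaurentPolynomial

noncomputable section

/-- The ground ring `k = ℤ[q,q⁻¹]`. -/
abbrev LP : Type := LaurentPolynomial ℤ

/-- The ring `k[X_1^{±1}, …, X_d^{±1}]` of Laurent polynomials in `d` variables over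
`k = ℤ[q,q⁻¹]`, realized as the monoid algebra of `ℤ^d`. -/
abbrev MvLaurent (d : ℕ) : Type := AddMonoidAlgebra LP (Fin d → ℤ)

/-- The variable `X_i`. -/
def Xvar {d : ℕ} (i : Fin d) : MvLaurent d :=
  AddMonoidAlgebra.single (Pi.single i (1 : ℤ)) (1 : LP)

/-- The additive automorphism of exponents induced by a permutation of the variables. -/
def permAddEquiv {d : ℕ} (π : Equiv.Perm (Fin d)) : (Fin d → ℤ) ≃+ (Fin d → ℤ) where
  toFun f := f ∘ π
  invFun f := f ∘ π.symm
  left_inv f := by funext x; simp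
  right_inv f := by funext x; simp
  map_add' f g := rfl

/-- The algebra automorphism of `k[X_1^{±1},…,X_d^{±1}]` permuting the variables by `π`. -/
def permAut {d : ℕ} (π : Equiv.Perm (Fin d)) : MvLaurent d ≃ₐ[LP] MvLaurent d :=
  AddMonoidAlgebra.domCongr LP LP (permAddEquiv π)

/-- The scalar `q^n` in `MvLaurent d`. -/
def qq {d : ℕ} (n : ℤ) : MvLaurent d := algebraMap LP (MvLaurent d) (T n)

/-- `H` is the Demazure–Lusztig operator for the pair of variables `(a, b)` (typically
`(i, i+1)`), i.e. it satisfies the defining equation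
`(X_a − X_b)·(H f) = q⁻¹·(X_a − X_b)·f + (q·X_b − q⁻¹·X_a)·(f − f^{s})`,
which uniquely characterizes `H f = q⁻¹·f + (q·X_b − q⁻¹·X_a)·(f − f^s)/(X_a − X_b)`. -/
def IsDL {d : ℕ} (a b : Fin d) (H : MvLaurent d → MvLaurent d) : Prop :=
  ∀ f : MvLaurent d,
    (Xvar a - Xvar b) * H f
      = qq (-1) * ((Xvar a - Xvar b) * f)
        + (qq 1 * Xvar b - qq (-1) * Xvar a) * (f - permAut (Equiv.swap a b) f)

end

/-- The Coxeter length of a permutation of `Fin n`, as the number of inversions. -/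
def lenPerm {n : ℕ} (w : Equiv.Perm (Fin n)) : ℕ :=
  (Finset.univ.filter fun p : Fin n × Fin n => p.1 < p.2 ∧ w p.2 < w p.1).card

/-- The minimal-length coset representatives of `𝔖_{a+b}/(𝔖_a × 𝔖_b)`: permutations `w`
with `ℓ(w) ≤ ℓ(wz)` for every `z` in the parabolic subgroup `𝔖_a × 𝔖_b` (permutations
preserving the first block `{0,…,a−1}`). -/
def grassReps (a b : ℕ) : Finset (Equiv.Perm (Fin (a + b))) :=
  Finset.univ.filter fun w =>
    ∀ z : Equiv.Perm (Fin (a + b)),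
      (∀ x : Fin (a + b), (x : ℕ) < a ↔ ((z x : ℕ) < a)) → lenPerm w ≤ lenPerm (w * z)
noncomputable section AlgLemmas
open AddMonoidAlgebra

variable {d : ℕ}

lemma qq_mul (m n : ℤ) : (qq m : MvLaurent d) * qq n = qq (m + n) := by
  unfold qq; rw [← map_mul, ← T_add]

lemma permAut_single (π : Equiv.Perm (Fin d)) (x : Fin d → ℤ) (c : LP) :
    permAut π (AddMonoidAlgebra.single x c) = AddMonoidAlgebra.single (x ∘ π) c := by
  unfold permAut
  rw [AddMonoidAlgebra.domCongr_single]
  rfl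

lemma permAut_Xvar (π : Equiv.Perm (Fin d)) (i : Fin d) :
    permAut π (Xvar i) = Xvar (π⁻¹ i) := by
  rw [Xvar, permAut_single]
  congr 1
  funext x
  simp [Pi.single_apply, Equiv.eq_symm_apply, eq_comm, Equiv.Perm.inv_def]

lemma permAut_comp (σ τ : Equiv.Perm (Fin d)) (g : MvLaurent d) :
    permAut σ (permAut τ g) = permAut (τ * σ) g := by
  induction g using AddMonoidAlgebra.induction with
  | zero => simp only [map_zero]
  | single_add x c g _ _ ih =>
    simp only [map_add, ih]
    congr 1
    erw [permAut_single, permAut_single, permAut_single]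
    rfl

lemma permAut_one (g : MvLaurent d) : permAut (1 : Equiv.Perm (Fin d)) g = g := by
  induction g using AddMonoidAlgebra.induction with
  | zero => simp only [map_zero]
  | single_add x c g _ _ ih =>
    simp only [map_add, ih]
    congr 1
    erw [permAut_single]
    rfl

lemma permAut_qq (π : Equiv.Perm (Fin d)) (n : ℤ) : permAut π (qq n : MvLaurent d) = qq n :=
  AlgEquiv.commutes _ _

lemma sub_single_ne_zero {x y : Fin d → ℤ} (h : x ≠ y) {c : LP} (hc : c ≠ 0) (c' : LP) :
    (AddMonoidAlgebra.single x c - AddMonoidAlgebra.single y c' : MvLaurent d) ≠ 0 := by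
  intro h0
  have h1 : (AddMonoidAlgebra.single x c - AddMonoidAlgebra.single y c' : MvLaurent d).coeff x = 0 := by
    rw [h0]; rfl
  rw [AddMonoidAlgebra.coeff_sub, Finsupp.sub_apply] at h1
  erw [Finsupp.single_eq_same, Finsupp.single_eq_of_ne h, sub_zero] at h1
  exact hc h1

lemma pi_single_ne {i j : Fin d} (h : i ≠ j) : (Pi.single i (1:ℤ) : Fin d → ℤ) ≠ Pi.single j 1 := by
  intro he
  have := congrFun he i
  simp [Pi.single_apply, h] at this

lemma Xvar_sub_ne_zero {i j : Fin d} (h : i ≠ j) : Xvar i - Xvar j ≠ 0 :=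
  sub_single_ne_zero (pi_single_ne h) one_ne_zero _

lemma qq_mul_Xvar (n : ℤ) (i : Fin d) :
    (qq n : MvLaurent d) * Xvar i = AddMonoidAlgebra.single (Pi.single i 1) (T n) := by
  unfold qq Xvar
  rw [AddMonoidAlgebra.coe_algebraMap]
  show AddMonoidAlgebra.single 0 (algebraMap LP LP (T n)) * _ = _
  rw [AddMonoidAlgebra.single_mul_single]
  simp

lemma qq_ne_zero (n : ℤ) : (T n : LP) ≠ 0 :=
  (isUnit_T n).ne_zero

lemma D_ne_zero {i j : Fin d} (h : i ≠ j) :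
    (qq 1 * Xvar j - qq (-1) * Xvar i : MvLaurent d) ≠ 0 := by
  rw [qq_mul_Xvar, qq_mul_Xvar]
  exact sub_single_ne_zero (pi_single_ne (Ne.symm h)) (qq_ne_zero 1) _

end AlgLemmas
noncomputable section DLLemmas

variable {d : ℕ} {i j : Fin d} {H : MvLaurent d → MvLaurent d}

lemma permAut_swap_Xvar_left (i j : Fin d) :
    permAut (Equiv.swap i j) (Xvar i) = Xvar j := by
  rw [permAut_Xvar]; congr 1; simp

lemma permAut_swap_Xvar_right (i j : Fin d) :
    permAut (Equiv.swap i j) (Xvar j) = Xvar i := by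
  rw [permAut_Xvar]; congr 1; simp

lemma permAut_swap_swap (i j : Fin d) (g : MvLaurent d) :
    permAut (Equiv.swap i j) (permAut (Equiv.swap i j) g) = g := by
  rw [permAut_comp, Equiv.swap_mul_self, permAut_one]

lemma DL_fix (hij : i ≠ j) (hH : IsDL i j H) {g : MvLaurent d}
    (hfix : H g = qq (-1) * g) : permAut (Equiv.swap i j) g = g := by
  have h1 := hH g
  rw [hfix] at h1
  have h2 : (qq 1 * Xvar j - qq (-1) * Xvar i) * (g - permAut (Equiv.swap i j) g) = 0 := by
    linear_combination -h1
  rcases mul_eq_zero.mp h2 with h | h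
  · exact absurd h (D_ne_zero hij)
  · rw [sub_eq_zero] at h; exact h.symm

lemma DL_inv_of_fix (hij : i ≠ j) (hH : IsDL i j H) {g : MvLaurent d}
    (hfix : permAut (Equiv.swap i j) g = g) : H g = qq (-1) * g := by
  have h1 := hH g
  rw [hfix] at h1
  apply mul_left_cancel₀ (Xvar_sub_ne_zero hij)
  linear_combination h1

lemma DL_scalar (hij : i ≠ j) (hH : IsDL i j H) (c : ℤ) (g : MvLaurent d) :
    H (qq c * g) = qq c * H g := by
  have h1 := hH (qq c * g)
  have hs : permAut (Equiv.swap i j) (qq c * g) = qq c * permAut (Equiv.swap i j) g := by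
    rw [map_mul, permAut_qq]
  rw [hs] at h1
  have h2 := hH g
  apply mul_left_cancel₀ (Xvar_sub_ne_zero hij)
  linear_combination h1 - qq c * h2

lemma DL_pair (hij : i ≠ j) (hH : IsDL i j H) (g : MvLaurent d) :
    permAut (Equiv.swap i j) (qq 1 * g + H g) = qq 1 * g + H g := by
  have key : (Xvar i - Xvar j) * (qq 1 * g + H g)
      = (qq 1 * Xvar i - qq (-1) * Xvar j) * g
        - (qq 1 * Xvar j - qq (-1) * Xvar i) * permAut (Equiv.swap i j) g := by
    rw [mul_add, hH g]; ring
  have key2 := congrArg (permAut (Equiv.swap i j)) key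
  simp only [map_mul, map_sub, map_add, permAut_swap_Xvar_left, permAut_swap_Xvar_right,
    permAut_qq, permAut_swap_swap] at key2
  apply mul_left_cancel₀ (Xvar_sub_ne_zero hij)
  rw [map_add, map_mul, permAut_qq]
  linear_combination -key2 - key

end DLLemmas
section LenLemmas

variable {n : ℕ}

lemma mem_invSet {w : Equiv.Perm (Fin n)} {p : Fin n × Fin n} :
    p ∈ (Finset.univ.filter fun p : Fin n × Fin n => p.1 < p.2 ∧ w p.2 < w p.1)
      ↔ p.1 < p.2 ∧ w p.2 < w p.1 := by
  simp

lemma lenPerm_one : lenPerm (1 : Equiv.Perm (Fin n)) = 0 := by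
  rw [lenPerm, Finset.card_eq_zero, Finset.filter_eq_empty_iff]
  rintro ⟨x, y⟩ -
  simp only [Equiv.Perm.one_apply, not_and]
  exact fun h => asymm h

lemma lenPerm_inv (w : Equiv.Perm (Fin n)) : lenPerm w⁻¹ = lenPerm w := by
  rw [lenPerm, lenPerm]
  apply Finset.card_nbij' (fun p => (w⁻¹ p.2, w⁻¹ p.1)) (fun p => (w p.2, w p.1))
  · rintro ⟨x, y⟩ hxy
    rw [Finset.mem_coe, mem_invSet] at hxy
    rw [Finset.mem_coe, mem_invSet]
    simpa using hxy.symm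
  · rintro ⟨x, y⟩ hxy
    rw [Finset.mem_coe, mem_invSet] at hxy
    rw [Finset.mem_coe, mem_invSet]
    simpa using hxy.symm
  · rintro ⟨x, y⟩ -; simp
  · rintro ⟨x, y⟩ -; simp

lemma swap_adj_lt {k : ℕ} (hk : k + 1 < n) {p q : Fin n} (hpq : p < q)
    (hne : ¬((p : ℕ) = k ∧ (q : ℕ) = k + 1)) :
    Equiv.swap ⟨k, Nat.lt_of_succ_lt hk⟩ ⟨k+1, hk⟩ p
      < Equiv.swap ⟨k, Nat.lt_of_succ_lt hk⟩ ⟨k+1, hk⟩ q := by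
  set ka : Fin n := ⟨k, Nat.lt_of_succ_lt hk⟩ with hka
  set kb : Fin n := ⟨k+1, hk⟩ with hkb
  have hpq' : (p : ℕ) < (q : ℕ) := hpq
  by_cases hpa : p = ka
  · by_cases hqb : q = kb
    · exact absurd ⟨by rw [hpa], by rw [hqb]⟩ hne
    · have hqa : q ≠ ka := ne_of_gt (hpa ▸ hpq)
      rw [hpa, Equiv.swap_apply_left, Equiv.swap_apply_of_ne_of_ne hqa hqb]
      have h1 : k < (q : ℕ) := by rw [hpa] at hpq'; exact hpq'
      have h2 : (q : ℕ) ≠ k + 1 := fun h => hqb (Fin.ext h)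
      exact Fin.lt_def.mpr (show k + 1 < (q : ℕ) by omega)
  · by_cases hpb : p = kb
    · have hqb : q ≠ kb := ne_of_gt (hpb ▸ hpq)
      have hqa : q ≠ ka := by
        intro h
        rw [hpb, h] at hpq'
        exact absurd hpq' (by show ¬ (k+1 < k); omega)
      rw [hpb, Equiv.swap_apply_right, Equiv.swap_apply_of_ne_of_ne hqa hqb]
      have h1 : k + 1 < (q : ℕ) := by rw [hpb] at hpq'; exact hpq'
      exact Fin.lt_def.mpr (show k < (q : ℕ) by omega)
    · rw [Equiv.swap_apply_of_ne_of_ne hpa hpb]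
      by_cases hqa : q = ka
      · rw [hqa, Equiv.swap_apply_left]
        have h1 : (p : ℕ) < k := by
          have h2 : (p : ℕ) < k := by
            rw [hqa] at hpq'
            exact lt_of_le_of_ne (Nat.lt_succ_iff.mp (Nat.lt_succ_of_lt hpq'))
              (fun h => hpa (Fin.ext h))
          exact h2
        exact Fin.lt_def.mpr (show (p : ℕ) < k + 1 by omega)
      · by_cases hqb : q = kb
        · rw [hqb, Equiv.swap_apply_right]
          have h1 : (p : ℕ) < k + 1 := by rw [hqb] at hpq'; exact hpq'
          have h2 : (p : ℕ) ≠ k := fun h => hpa (Fin.ext h)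
          exact Fin.lt_def.mpr (show (p : ℕ) < k by omega)
        · rw [Equiv.swap_apply_of_ne_of_ne hqa hqb]; exact hpq

lemma lenPerm_mul_swap {k : ℕ} (hk : k + 1 < n) (w : Equiv.Perm (Fin n))
    (hwk : w ⟨k, Nat.lt_of_succ_lt hk⟩ < w ⟨k+1, hk⟩) :
    lenPerm (w * Equiv.swap ⟨k, Nat.lt_of_succ_lt hk⟩ ⟨k+1, hk⟩) = lenPerm w + 1 := by
  set ka : Fin n := ⟨k, Nat.lt_of_succ_lt hk⟩ with hka
  set kb : Fin n := ⟨k+1, hk⟩ with hkb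
  set s : Equiv.Perm (Fin n) := Equiv.swap ka kb with hs
  have hss : ∀ x, s (s x) = x := fun x => Equiv.swap_apply_self _ _ x
  have hsa : s ka = kb := Equiv.swap_apply_left _ _
  have hsb : s kb = ka := Equiv.swap_apply_right _ _
  have hmem : (ka, kb) ∈
      (Finset.univ.filter fun p : Fin n × Fin n => p.1 < p.2 ∧ (w * s) p.2 < (w * s) p.1) := by
    rw [mem_invSet]
    refine ⟨by simp [hka, hkb, Fin.lt_def], ?_⟩
    simpa [Equiv.Perm.mul_apply, hsa, hsb] using hwk
  rw [lenPerm, ← Finset.card_erase_add_one hmem]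
  congr 1
  rw [lenPerm]
  apply Finset.card_nbij' (fun p => (s p.1, s p.2)) (fun p => (s p.1, s p.2))
  · rintro ⟨x, y⟩ hxy
    rw [Finset.mem_coe, Finset.mem_erase, mem_invSet] at hxy
    obtain ⟨hpair, hlt, hinv⟩ := hxy
    have hnexy : ¬((x : ℕ) = k ∧ (y : ℕ) = k + 1) := by
      rintro ⟨hx, hy⟩
      exact hpair (by rw [Prod.ext_iff]; exact ⟨Fin.ext hx, Fin.ext hy⟩)
    rw [Finset.mem_coe, mem_invSet]
    refine ⟨swap_adj_lt hk hlt hnexy, ?_⟩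
    simpa [Equiv.Perm.mul_apply] using hinv
  · rintro ⟨x, y⟩ hxy
    rw [Finset.mem_coe, mem_invSet] at hxy
    obtain ⟨hlt, hinv⟩ := hxy
    have hnexy : ¬((x : ℕ) = k ∧ (y : ℕ) = k + 1) := by
      rintro ⟨hx, hy⟩
      have hxa : x = ka := Fin.ext hx
      have hyb : y = kb := Fin.ext hy
      rw [hxa, hyb] at hinv
      exact absurd hwk (asymm hinv)
    rw [Finset.mem_coe, Finset.mem_erase, mem_invSet]
    refine ⟨?_, swap_adj_lt hk hlt hnexy, ?_⟩
    · intro hpairv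
      have h1 : s x = ka := congrArg Prod.fst hpairv
      have h2 : s y = kb := congrArg Prod.snd hpairv
      have hx : x = kb := by rw [← hss x, h1, hsa]
      have hy : y = ka := by rw [← hss y, h2, hsb]
      rw [hx, hy] at hlt
      exact absurd hlt (by rw [hka, hkb]; simp [Fin.lt_def])
    · show (w * s) (s y) < (w * s) (s x)
      simpa [Equiv.Perm.mul_apply, hss] using hinv
  · rintro ⟨x, y⟩ -; simp [hss]
  · rintro ⟨x, y⟩ -; simp [hss]

lemma lenPerm_mul_swap_descent {k : ℕ} (hk : k + 1 < n) (w : Equiv.Perm (Fin n))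
    (hwk : w ⟨k+1, hk⟩ < w ⟨k, Nat.lt_of_succ_lt hk⟩) :
    lenPerm w = lenPerm (w * Equiv.swap ⟨k, Nat.lt_of_succ_lt hk⟩ ⟨k+1, hk⟩) + 1 := by
  set ka : Fin n := ⟨k, Nat.lt_of_succ_lt hk⟩
  set kb : Fin n := ⟨k+1, hk⟩
  have h := lenPerm_mul_swap hk (w * Equiv.swap ka kb)
    (by show w (Equiv.swap ka kb ka) < w (Equiv.swap ka kb kb)
        rw [Equiv.swap_apply_left, Equiv.swap_apply_right]; exact hwk)
  rwa [mul_assoc, Equiv.swap_mul_self, mul_one] at h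

lemma lenPerm_swap_adj {k : ℕ} (hk : k + 1 < n) :
    lenPerm (Equiv.swap ⟨k, Nat.lt_of_succ_lt hk⟩ ⟨k+1, hk⟩) = 1 := by
  have h := lenPerm_mul_swap hk 1 (by simp [Fin.lt_def])
  rwa [one_mul, lenPerm_one] at h

lemma lenPerm_swap_mul {k : ℕ} (hk : k + 1 < n) (w : Equiv.Perm (Fin n))
    (hwk : w⁻¹ ⟨k, Nat.lt_of_succ_lt hk⟩ < w⁻¹ ⟨k+1, hk⟩) :
    lenPerm (Equiv.swap ⟨k, Nat.lt_of_succ_lt hk⟩ ⟨k+1, hk⟩ * w) = lenPerm w + 1 := by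
  set ka : Fin n := ⟨k, Nat.lt_of_succ_lt hk⟩
  set kb : Fin n := ⟨k+1, hk⟩
  have h := lenPerm_mul_swap hk w⁻¹ hwk
  calc lenPerm (Equiv.swap ka kb * w) = lenPerm ((Equiv.swap ka kb * w)⁻¹) := (lenPerm_inv _).symm
    _ = lenPerm (w⁻¹ * Equiv.swap ka kb) := by rw [mul_inv_rev, Equiv.swap_inv]
    _ = lenPerm w⁻¹ + 1 := h
    _ = lenPerm w + 1 := by rw [lenPerm_inv]

lemma lenPerm_swap_mul_descent {k : ℕ} (hk : k + 1 < n) (w : Equiv.Perm (Fin n))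
    (hwk : w⁻¹ ⟨k+1, hk⟩ < w⁻¹ ⟨k, Nat.lt_of_succ_lt hk⟩) :
    lenPerm w = lenPerm (Equiv.swap ⟨k, Nat.lt_of_succ_lt hk⟩ ⟨k+1, hk⟩ * w) + 1 := by
  set ka : Fin n := ⟨k, Nat.lt_of_succ_lt hk⟩
  set kb : Fin n := ⟨k+1, hk⟩
  have h := lenPerm_swap_mul hk (Equiv.swap ka kb * w)
    (by
      rw [mul_inv_rev, Equiv.swap_inv]
      show w⁻¹ (Equiv.swap ka kb ka) < w⁻¹ (Equiv.swap ka kb kb)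
      rw [Equiv.swap_apply_left, Equiv.swap_apply_right]; exact hwk)
  rwa [← mul_assoc, Equiv.swap_mul_self, one_mul] at h

/-- If `w` has no descent between positions `i` and `j` then `w i ≤ w j`. -/
lemma chain_le (w : Equiv.Perm (Fin n)) :
    ∀ t : ℕ, ∀ i j : Fin n, (j : ℕ) = (i : ℕ) + t →
      (∀ m : ℕ, (i : ℕ) ≤ m → ∀ hm1 : m + 1 ≤ (j : ℕ),
        w ⟨m, Nat.lt_of_succ_lt (Nat.lt_of_le_of_lt hm1 j.isLt)⟩
          < w ⟨m + 1, Nat.lt_of_le_of_lt hm1 j.isLt⟩) →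
      w i ≤ w j := by
  intro t
  induction t with
  | zero =>
    intro i j hij _
    have : i = j := Fin.ext (by omega)
    rw [this]
  | succ t ih =>
    intro i j hij hchain
    have hj' : (i : ℕ) + t < n := by have := j.isLt; omega
    set j' : Fin n := ⟨(i : ℕ) + t, hj'⟩ with hj'def
    have h1 : w i ≤ w j' := by
      apply ih i j' rfl
      intro m hm hm1
      have hm2 : m + 1 ≤ (j : ℕ) := by
        have : m + 1 ≤ (i : ℕ) + t := hm1
        omega
      exact hchain m hm hm2
    have hm2 : ((i : ℕ) + t) + 1 ≤ (j : ℕ) := by omega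
    have h2 := hchain ((i : ℕ) + t) (by omega) hm2
    have e2 : j = ⟨(i : ℕ) + t + 1, Nat.lt_of_le_of_lt hm2 j.isLt⟩ :=
      Fin.ext (show (j : ℕ) = (i : ℕ) + t + 1 by omega)
    rw [e2]
    exact le_of_lt (lt_of_le_of_lt h1 h2)

/-- If `w i > w j` for some `i < j`, there is an adjacent descent between them. -/
lemma exists_mid_descent (w : Equiv.Perm (Fin n)) {i j : Fin n} (hij : i < j)
    (hw : w j < w i) :
    ∃ m : ℕ, (i : ℕ) ≤ m ∧ m + 1 ≤ (j : ℕ) ∧ ∃ hm : m + 1 < n,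
      w ⟨m + 1, hm⟩ < w ⟨m, Nat.lt_of_succ_lt hm⟩ := by
  by_contra hcon
  push_neg at hcon
  have hchain : ∀ m : ℕ, (i : ℕ) ≤ m → ∀ hm1 : m + 1 ≤ (j : ℕ),
      w ⟨m, Nat.lt_of_succ_lt (Nat.lt_of_le_of_lt hm1 j.isLt)⟩
        < w ⟨m + 1, Nat.lt_of_le_of_lt hm1 j.isLt⟩ := by
    intro m hm hm1
    have hmn : m + 1 < n := Nat.lt_of_le_of_lt hm1 j.isLt
    have hne : w ⟨m, Nat.lt_of_succ_lt hmn⟩ ≠ w ⟨m+1, hmn⟩ := by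
      intro he
      have := w.injective he
      simp [Fin.ext_iff] at this
    exact lt_of_le_of_ne (hcon m hm hm1 hmn) hne
  have := chain_le w ((j : ℕ) - (i : ℕ)) i j (by omega) hchain
  exact absurd hw (not_lt.mpr this)

lemma exists_descent {w : Equiv.Perm (Fin n)} (hw : w ≠ 1) :
    ∃ k : ℕ, ∃ hk : k + 1 < n, w ⟨k+1, hk⟩ < w ⟨k, Nat.lt_of_succ_lt hk⟩ := by
  by_contra hcon
  push_neg at hcon
  have hmono : StrictMono w := by
    intro i j hij
    rcases lt_or_ge (w i) (w j) with h | h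
    · exact h
    rcases eq_or_lt_of_le h with h' | h'
    · exact absurd (w.injective h'.symm) (ne_of_lt hij)
    · obtain ⟨m, _, _, hm, hdesc⟩ := exists_mid_descent w hij h'
      exact absurd hdesc (not_lt.mpr (hcon m hm))
  have hinvmono : StrictMono (w⁻¹ : Equiv.Perm (Fin n)) := by
    intro i j hij
    apply hmono.lt_iff_lt.mp
    simpa using hij
  have key : ∀ (v : Equiv.Perm (Fin n)), StrictMono v → ∀ m : ℕ, ∀ hm : m < n,
      m ≤ ((v ⟨m, hm⟩ : Fin n) : ℕ) := by
    intro v hv m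
    induction m with
    | zero => intro hm; exact Nat.zero_le _
    | succ m ih =>
      intro hm
      have h1 : v ⟨m, Nat.lt_of_succ_lt hm⟩ < v ⟨m+1, hm⟩ := hv (by simp [Fin.lt_def])
      have h2 := ih (Nat.lt_of_succ_lt hm)
      have h3 : ((v ⟨m, Nat.lt_of_succ_lt hm⟩ : Fin n) : ℕ) < ((v ⟨m+1, hm⟩ : Fin n) : ℕ) := h1
      omega
  have : ∀ i, w i = i := by
    intro i
    have h1 : i ≤ w i := by
      have h := key w hmono i.val i.isLt
      exact Fin.le_def.mpr h
    have h2 : i ≤ w⁻¹ i := by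
      have h := key w⁻¹ hinvmono i.val i.isLt
      exact Fin.le_def.mpr h
    have h3 : w i ≤ w (w⁻¹ i) := hmono.monotone h2
    rw [show w (w⁻¹ i) = i from w.apply_symm_apply i] at h3
    exact le_antisymm h3 h1
  exact hw (Equiv.ext this)

end LenLemmas
section Grass

variable {a b : ℕ}

/-- Elements of `grassReps` are increasing within each block. -/
lemma blockInc_of_mem {w : Equiv.Perm (Fin (a+b))} (hw : w ∈ grassReps a b) :
    ∀ i j : Fin (a+b), i < j → ((j : ℕ) < a ∨ a ≤ (i : ℕ)) → w i < w j := by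
  intro i j hij hblk
  by_contra hcon
  have hne : w i ≠ w j := fun h => (ne_of_lt hij) (w.injective h)
  have hlt : w j < w i := lt_of_le_of_ne (not_lt.mp hcon) (Ne.symm hne)
  obtain ⟨m, hm1, hm2, hmn, hdesc⟩ := exists_mid_descent w hij hlt
  set z := Equiv.swap (⟨m, Nat.lt_of_succ_lt hmn⟩ : Fin (a+b)) ⟨m+1, hmn⟩ with hz
  have hiff : ((m : ℕ) < a ↔ m + 1 < a) := by omega
  have hzpres : ∀ x : Fin (a+b), (x : ℕ) < a ↔ ((z x : ℕ) < a) := by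
    intro x
    by_cases hx1 : x = (⟨m, Nat.lt_of_succ_lt hmn⟩ : Fin (a+b))
    · rw [hx1, hz, Equiv.swap_apply_left]
      exact hiff
    · by_cases hx2 : x = (⟨m+1, hmn⟩ : Fin (a+b))
      · rw [hx2, hz, Equiv.swap_apply_right]
        exact hiff.symm
      · rw [hz, Equiv.swap_apply_of_ne_of_ne hx1 hx2]
  have hgr := (Finset.mem_filter.mp hw).2 z hzpres
  have hd := lenPerm_mul_swap_descent hmn w hdesc
  rw [← hz] at hd
  omega

lemma mem_of_blockInc {w : Equiv.Perm (Fin (a+b))}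
    (hw : ∀ i j : Fin (a+b), i < j → ((j : ℕ) < a ∨ a ≤ (i : ℕ)) → w i < w j) :
    w ∈ grassReps a b := by
  rw [grassReps, Finset.mem_filter]
  refine ⟨Finset.mem_univ _, ?_⟩
  intro z hz
  have hz' : ∀ u : Fin (a+b), ((z⁻¹ u : Fin (a+b)) : ℕ) < a ↔ (u : ℕ) < a := by
    intro u
    have := hz (z⁻¹ u)
    rw [show z (z⁻¹ u) = u from z.apply_symm_apply u] at this
    exact this
  rw [lenPerm, lenPerm]
  apply Finset.card_le_card_of_injOn (fun p => (z⁻¹ p.1, z⁻¹ p.2))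
  · rintro ⟨x, y⟩ hxy
    rw [Finset.mem_coe, mem_invSet] at hxy
    obtain ⟨hlt, hinv⟩ := hxy
    have hcross : (x : ℕ) < a ∧ a ≤ (y : ℕ) := by
      by_contra hc
      have hcond : (y : ℕ) < a ∨ a ≤ (x : ℕ) := by omega
      exact absurd (hw x y hlt hcond) (asymm hinv)
    rw [Finset.mem_coe, mem_invSet]
    constructor
    · have h1 : ((z⁻¹ x : Fin (a+b)) : ℕ) < a := (hz' x).mpr hcross.1
      have h2 : ¬ ((z⁻¹ y : Fin (a+b)) : ℕ) < a := by
        rw [hz' y]; omega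
      have hgoal : z⁻¹ x < z⁻¹ y := Fin.lt_def.mpr (by omega)
      exact hgoal
    · show (w * z) (z⁻¹ y) < (w * z) (z⁻¹ x)
      simpa [Equiv.Perm.mul_apply, Equiv.Perm.inv_def, Equiv.apply_symm_apply] using hinv
  · intro p hp q hq hpq
    have h1 := congrArg Prod.fst hpq
    have h2 := congrArg Prod.snd hpq
    simp only at h1 h2
    exact Prod.ext ((Equiv.injective z⁻¹) h1) ((Equiv.injective z⁻¹) h2)

end Grass
section HopLemmas

variable {n : ℕ}

lemma Hop_scalar_aux (Hop : Equiv.Perm (Fin n) → MvLaurent n → MvLaurent n)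
    (hone : ∀ f, Hop 1 f = f)
    (hdl : ∀ (i : ℕ) (hi : i + 1 < n),
      IsDL ⟨i, Nat.lt_of_succ_lt hi⟩ ⟨i + 1, hi⟩
        (Hop (Equiv.swap ⟨i, Nat.lt_of_succ_lt hi⟩ ⟨i + 1, hi⟩)))
    (hmul : ∀ u v : Equiv.Perm (Fin n),
      lenPerm (u * v) = lenPerm u + lenPerm v → ∀ f, Hop (u * v) f = Hop u (Hop v f)) :
    ∀ N : ℕ, ∀ w : Equiv.Perm (Fin n), lenPerm w ≤ N →
      ∀ (c : ℤ) (g : MvLaurent n), Hop w (qq c * g) = qq c * Hop w g := by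
  intro N
  induction N with
  | zero =>
    intro w hw c g
    rcases eq_or_ne w 1 with rfl | hne
    · rw [hone, hone]
    · obtain ⟨k, hk, hd⟩ := exists_descent hne
      have := lenPerm_mul_swap_descent hk w hd
      omega
  | succ N ih =>
    intro w hw c g
    rcases eq_or_ne w 1 with rfl | hne
    · rw [hone, hone]
    · have hinv : w⁻¹ ≠ 1 := fun h => hne (by rwa [inv_eq_one] at h)
      obtain ⟨k, hk, hd⟩ := exists_descent hinv
      set ka : Fin n := ⟨k, Nat.lt_of_succ_lt hk⟩ with hka
      set kb : Fin n := ⟨k+1, hk⟩ with hkb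
      set s : Equiv.Perm (Fin n) := Equiv.swap ka kb with hs
      have hkane : ka ≠ kb := Fin.ne_of_val_ne (show k ≠ k + 1 by omega)
      have hlen : lenPerm w = lenPerm (s * w) + 1 := lenPerm_swap_mul_descent hk w hd
      set w' : Equiv.Perm (Fin n) := s * w with hw'
      have hsw : s * w' = w := by rw [hw', ← mul_assoc, hs, Equiv.swap_mul_self, one_mul]
      have hlens : lenPerm s = 1 := lenPerm_swap_adj hk
      have hadd : lenPerm (s * w') = lenPerm s + lenPerm w' := by
        rw [hsw, hlens]; omega
      have hHop : ∀ h : MvLaurent n, Hop w h = Hop s (Hop w' h) := by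
        intro h
        rw [← hsw]
        exact hmul s w' hadd h
      have hw'len : lenPerm w' ≤ N := by omega
      rw [hHop (qq c * g), hHop g, ih w' hw'len c g]
      exact DL_scalar hkane (hdl k hk) c (Hop w' g)

end HopLemmas
section MainLemmas

variable {a b : ℕ}

lemma grass_swap_mem (k : ℕ) (hk : k + 1 < a + b) {w : Equiv.Perm (Fin (a+b))}
    (hwS : w ∈ grassReps a b)
    (hwB : ¬(((w⁻¹ ⟨k, Nat.lt_of_succ_lt hk⟩ : Fin (a+b)) : ℕ) < a ↔
        ((w⁻¹ ⟨k+1, hk⟩ : Fin (a+b)) : ℕ) < a)) :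
    Equiv.swap ⟨k, Nat.lt_of_succ_lt hk⟩ ⟨k+1, hk⟩ * w ∈ grassReps a b := by
  set ka : Fin (a+b) := ⟨k, Nat.lt_of_succ_lt hk⟩ with hkadef
  set kb : Fin (a+b) := ⟨k+1, hk⟩ with hkbdef
  apply mem_of_blockInc
  intro i j hij hcond
  show Equiv.swap ka kb (w i) < Equiv.swap ka kb (w j)
  have hwij : w i < w j := blockInc_of_mem hwS i j hij hcond
  apply swap_adj_lt hk hwij
  rintro ⟨h1, h2⟩
  have hia : w i = ka := Fin.ext h1
  have hja : w j = kb := Fin.ext h2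
  have hi : i = w⁻¹ ka := by rw [← hia, show w⁻¹ (w i) = i from w.symm_apply_apply i]
  have hj : j = w⁻¹ kb := by rw [← hja, show w⁻¹ (w j) = j from w.symm_apply_apply j]
  apply hwB
  rw [← hi, ← hj]
  have hij' : (i : ℕ) < (j : ℕ) := hij
  omega

lemma sameBlock_fix (Hop : Equiv.Perm (Fin (a + b)) → MvLaurent (a + b) → MvLaurent (a + b))
    (hone : ∀ f, Hop 1 f = f)
    (hdl : ∀ (i : ℕ) (hi : i + 1 < a + b),
      IsDL ⟨i, Nat.lt_of_succ_lt hi⟩ ⟨i + 1, hi⟩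
        (Hop (Equiv.swap ⟨i, Nat.lt_of_succ_lt hi⟩ ⟨i + 1, hi⟩)))
    (hmul : ∀ u v : Equiv.Perm (Fin (a + b)),
      lenPerm (u * v) = lenPerm u + lenPerm v → ∀ f, Hop (u * v) f = Hop u (Hop v f))
    (f : MvLaurent (a + b))
    (hf : ∀ z : Equiv.Perm (Fin (a + b)),
      (∀ x : Fin (a + b), (x : ℕ) < a ↔ ((z x : ℕ) < a)) → permAut z f = f)
    (k : ℕ) (hk : k + 1 < a + b) {w : Equiv.Perm (Fin (a+b))}
    (hwS : w ∈ grassReps a b)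
    (hwB : (((w⁻¹ ⟨k, Nat.lt_of_succ_lt hk⟩ : Fin (a+b)) : ℕ) < a ↔
        ((w⁻¹ ⟨k+1, hk⟩ : Fin (a+b)) : ℕ) < a)) :
    permAut (Equiv.swap ⟨k, Nat.lt_of_succ_lt hk⟩ ⟨k+1, hk⟩) (Hop w f) = Hop w f := by
  set ka : Fin (a+b) := ⟨k, Nat.lt_of_succ_lt hk⟩ with hkadef
  set kb : Fin (a+b) := ⟨k+1, hk⟩ with hkbdef
  set s := Equiv.swap ka kb with hsdef
  have hkane : ka ≠ kb := Fin.ne_of_val_ne (show k ≠ k + 1 by omega)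
  set p : Fin (a+b) := w⁻¹ ka with hpdef
  set p' : Fin (a+b) := w⁻¹ kb with hp'def
  have hwp : w p = ka := w.apply_symm_apply ka
  have hwp' : w p' = kb := w.apply_symm_apply kb
  have hblk := blockInc_of_mem hwS
  have hkakb : ka < kb := Fin.lt_def.mpr (Nat.lt_succ_self k)
  have hppne : p ≠ p' := fun h => hkane (by rw [← hwp, ← hwp', h])
  have hpp' : p < p' := by
    rcases lt_or_ge p p' with h | h
    · exact h
    · exfalso
      have h2 : p' < p := lt_of_le_of_ne h (Ne.symm hppne)
      have hcond : ((p : ℕ) < a ∨ a ≤ (p' : ℕ)) := by omega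
      have := hblk p' p h2 hcond
      rw [hwp, hwp'] at this
      exact absurd this (asymm hkakb)
  have hval : (p' : ℕ) = (p : ℕ) + 1 := by
    by_contra hv
    have h1 : (p : ℕ) + 1 < (p' : ℕ) := by
      have : (p : ℕ) < (p' : ℕ) := hpp'
      omega
    have hrlt : (p : ℕ) + 1 < a + b := lt_trans h1 p'.isLt
    set r : Fin (a+b) := ⟨(p : ℕ) + 1, hrlt⟩ with hrdef
    have hr1 : p < r := Fin.lt_def.mpr (show (p : ℕ) < (p : ℕ) + 1 by omega)
    have hr2 : r < p' := Fin.lt_def.mpr h1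
    have hc1 : ((r : ℕ) < a ∨ a ≤ (p : ℕ)) := by
      rcases lt_or_ge ((p : ℕ)) a with hpa | hpa
      · left
        have : (p' : ℕ) < a := hwB.mp hpa
        show (p : ℕ) + 1 < a
        omega
      · right; exact hpa
    have hc2 : ((p' : ℕ) < a ∨ a ≤ (r : ℕ)) := by
      rcases lt_or_ge ((p : ℕ)) a with hpa | hpa
      · left; exact hwB.mp hpa
      · right; show a ≤ (p : ℕ) + 1; omega
    have hlow := hblk p r hr1 hc1
    have hhigh := hblk r p' hr2 hc2
    rw [hwp] at hlow
    rw [hwp'] at hhigh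
    have l1 : k < ((w r : Fin (a+b)) : ℕ) := hlow
    have l2 : ((w r : Fin (a+b)) : ℕ) < k + 1 := hhigh
    omega
  have hmn : (p : ℕ) + 1 < a + b := by rw [← hval]; exact p'.isLt
  have hpeq : (⟨(p : ℕ), Nat.lt_of_succ_lt hmn⟩ : Fin (a+b)) = p := Fin.ext rfl
  have hp'eq : (⟨(p : ℕ) + 1, hmn⟩ : Fin (a+b)) = p' := Fin.ext hval.symm
  set z := Equiv.swap (⟨(p : ℕ), Nat.lt_of_succ_lt hmn⟩ : Fin (a+b)) ⟨(p : ℕ) + 1, hmn⟩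
    with hzdef
  have hz2 : z = Equiv.swap p p' := by rw [hzdef, hpeq, hp'eq]
  have hzp : z p = p' := by rw [hz2]; exact Equiv.swap_apply_left _ _
  have hzp' : z p' = p := by rw [hz2]; exact Equiv.swap_apply_right _ _
  have hzx : ∀ x, x ≠ p → x ≠ p' → z x = x := fun x h1 h2 => by
    rw [hz2]; exact Equiv.swap_apply_of_ne_of_ne h1 h2
  have hswz : s * w = w * z := by
    apply Equiv.ext
    intro x
    rw [Equiv.Perm.mul_apply, Equiv.Perm.mul_apply]
    by_cases hx1 : x = p
    · rw [hx1, hwp, hzp, hwp']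
      exact Equiv.swap_apply_left ka kb
    · by_cases hx2 : x = p'
      · rw [hx2, hwp', hzp', hwp]
        exact Equiv.swap_apply_right ka kb
      · rw [hzx x hx1 hx2]
        have hne1 : w x ≠ ka := fun h => hx1 (by rw [← hwp] at h; exact w.injective h)
        have hne2 : w x ≠ kb := fun h => hx2 (by rw [← hwp'] at h; exact w.injective h)
        exact Equiv.swap_apply_of_ne_of_ne hne1 hne2
  have hwlt : w ⟨(p : ℕ), Nat.lt_of_succ_lt hmn⟩ < w ⟨(p : ℕ) + 1, hmn⟩ := by
    rw [hpeq, hp'eq, hwp, hwp']; exact hkakb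
  have hlen1 : lenPerm (w * z) = lenPerm w + 1 := lenPerm_mul_swap hmn w hwlt
  have hlenz : lenPerm z = 1 := lenPerm_swap_adj hmn
  have hzpres : ∀ x : Fin (a+b), (x : ℕ) < a ↔ (((z x : Fin (a+b))) : ℕ) < a := by
    intro x
    by_cases hx1 : x = p
    · rw [hx1, hzp]; exact hwB
    · by_cases hx2 : x = p'
      · rw [hx2, hzp']; exact hwB.symm
      · rw [hzx x hx1 hx2]
  have hHz : Hop z f = qq (-1) * f := by
    have hne : (⟨(p : ℕ), Nat.lt_of_succ_lt hmn⟩ : Fin (a+b)) ≠ ⟨(p : ℕ) + 1, hmn⟩ :=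
      Fin.ne_of_val_ne (by omega)
    exact DL_inv_of_fix hne (hdl (p : ℕ) hmn) (hf z hzpres)
  have h3 : Hop (w * z) f = Hop w (Hop z f) := hmul w z (by rw [hlen1, hlenz]) f
  have hlens : lenPerm s = 1 := lenPerm_swap_adj hk
  have h4 : Hop (s * w) f = Hop s (Hop w f) := hmul s w (by rw [hswz, hlen1, hlens]; omega) f
  have h5 : Hop s (Hop w f) = qq (-1) * Hop w f := by
    rw [← h4, hswz, h3, hHz]
    exact Hop_scalar_aux Hop hone hdl hmul (lenPerm w) w le_rfl (-1) f
  exact DL_fix hkane (hdl k hk) h5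

end MainLemmas

/-- let `σ_{a,b} = Σ_w q^{ℓ(w₀)−ℓ(w)} H_w`, summed over the minimal-length
coset representatives `w` of `𝔖_{a+b}/(𝔖_a × 𝔖_b)`, with `w₀` the longest such
representative. Here `H_w` is the action of the Hecke-basis element in the polynomial
representation (encoded by `Hop`, which sends adjacent transpositions to Demazure–Lusztig
operators and is compatible with length-additive products).  Then `σ_{a,b}` maps every
`𝔖_a × 𝔖_b`-invariant Laurent polynomial in `X_1,…,X_{a+b}` to an
`𝔖_{a+b}`-invariant Laurent polynomial. -/
theorem sigma_ab_maps_invariants_to_invariants (a b : ℕ)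
    (Hop : Equiv.Perm (Fin (a + b)) → MvLaurent (a + b) → MvLaurent (a + b))
    (hone : ∀ f, Hop 1 f = f)
    (hdl : ∀ (i : ℕ) (hi : i + 1 < a + b),
      IsDL ⟨i, Nat.lt_of_succ_lt hi⟩ ⟨i + 1, hi⟩
        (Hop (Equiv.swap ⟨i, Nat.lt_of_succ_lt hi⟩ ⟨i + 1, hi⟩)))
    (hmul : ∀ u v : Equiv.Perm (Fin (a + b)),
      lenPerm (u * v) = lenPerm u + lenPerm v → ∀ f, Hop (u * v) f = Hop u (Hop v f))
    (w0 : Equiv.Perm (Fin (a + b)))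
    (hw0mem : w0 ∈ grassReps a b)
    (hw0max : ∀ w ∈ grassReps a b, lenPerm w ≤ lenPerm w0)
    (f : MvLaurent (a + b))
    (hf : ∀ z : Equiv.Perm (Fin (a + b)),
      (∀ x : Fin (a + b), (x : ℕ) < a ↔ ((z x : ℕ) < a)) → permAut z f = f) :
    ∀ π : Equiv.Perm (Fin (a + b)),
      permAut π
          (∑ w ∈ grassReps a b, qq ((lenPerm w0 : ℤ) - (lenPerm w : ℤ)) * Hop w f)
        = ∑ w ∈ grassReps a b, qq ((lenPerm w0 : ℤ) - (lenPerm w : ℤ)) * Hop w f := by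
  classical
  set F : MvLaurent (a + b) :=
    ∑ w ∈ grassReps a b, qq ((lenPerm w0 : ℤ) - (lenPerm w : ℤ)) * Hop w f with hFdef
  have key : ∀ (k : ℕ) (hk : k + 1 < a + b),
      permAut (Equiv.swap ⟨k, Nat.lt_of_succ_lt hk⟩ ⟨k+1, hk⟩) F = F := by
    intro k hk
    set ka : Fin (a+b) := ⟨k, Nat.lt_of_succ_lt hk⟩ with hkadef
    set kb : Fin (a+b) := ⟨k+1, hk⟩ with hkbdef
    set s := Equiv.swap ka kb with hsdef
    have hkane : ka ≠ kb := Fin.ne_of_val_ne (show k ≠ k + 1 by omega)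
    set t : Equiv.Perm (Fin (a+b)) → MvLaurent (a+b) :=
      fun w => qq ((lenPerm w0 : ℤ) - (lenPerm w : ℤ)) * Hop w f with htdef
    have hFt : F = ∑ w ∈ grassReps a b, t w := rfl
    set Bp : Equiv.Perm (Fin (a+b)) → Prop := fun w =>
      (((w⁻¹ ka : Fin (a+b)) : ℕ) < a ↔ ((w⁻¹ kb : Fin (a+b)) : ℕ) < a) with hBpdef
    rw [hFt, ← Finset.sum_filter_add_sum_filter_not (grassReps a b) Bp, map_add]
    have hB : permAut s (∑ w ∈ (grassReps a b).filter Bp, t w)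
        = ∑ w ∈ (grassReps a b).filter Bp, t w := by
      rw [map_sum]
      apply Finset.sum_congr rfl
      intro w hw
      rw [Finset.mem_filter] at hw
      show permAut s (qq ((lenPerm w0 : ℤ) - (lenPerm w : ℤ)) * Hop w f)
        = qq ((lenPerm w0 : ℤ) - (lenPerm w : ℤ)) * Hop w f
      rw [map_mul, permAut_qq, sameBlock_fix Hop hone hdl hmul f hf k hk hw.1 hw.2]
    have hC : permAut s (∑ w ∈ (grassReps a b).filter (fun w => ¬ Bp w), t w)
        = ∑ w ∈ (grassReps a b).filter (fun w => ¬ Bp w), t w := by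
      set C := (grassReps a b).filter (fun w => ¬ Bp w) with hCdef
      have hmemC : ∀ w ∈ C, (s * w ∈ C) ∧ ((s * w)⁻¹ ka = w⁻¹ kb)
          ∧ ((s * w)⁻¹ kb = w⁻¹ ka) ∧ (s * (s * w) = w) := by
        intro w hw
        rw [hCdef, Finset.mem_filter] at hw
        have h1 : s * w ∈ grassReps a b := grass_swap_mem k hk hw.1 hw.2
        have hinv : (s * w)⁻¹ = w⁻¹ * s := by rw [mul_inv_rev, hsdef, Equiv.swap_inv]
        have e1 : (s * w)⁻¹ ka = w⁻¹ kb := by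
          rw [hinv, Equiv.Perm.mul_apply, hsdef, Equiv.swap_apply_left]
        have e2 : (s * w)⁻¹ kb = w⁻¹ ka := by
          rw [hinv, Equiv.Perm.mul_apply, hsdef, Equiv.swap_apply_right]
        have hBneg : ¬ Bp (s * w) := by
          intro hiff
          apply hw.2
          rw [hBpdef] at hiff ⊢
          simp only at hiff ⊢
          rw [e1, e2] at hiff
          exact hiff.symm
        have hss : s * (s * w) = w := by
          rw [← mul_assoc, hsdef, Equiv.swap_mul_self, one_mul]
        exact ⟨Finset.mem_filter.mpr ⟨h1, hBneg⟩, e1, e2, hss⟩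
      have hppne : ∀ w : Equiv.Perm (Fin (a+b)), w⁻¹ ka ≠ w⁻¹ kb :=
        fun w h => hkane (w⁻¹.injective h)
      set Cp := C.filter (fun w => w⁻¹ ka < w⁻¹ kb) with hCpdef
      set Cm := C.filter (fun w => ¬ (w⁻¹ ka < w⁻¹ kb)) with hCmdef
      have hsplit : ∑ w ∈ C, t w = ∑ w ∈ Cp, t w + ∑ w ∈ Cm, t w :=
        (Finset.sum_filter_add_sum_filter_not C _ t).symm
      have hbij : ∑ w ∈ Cm, t w = ∑ w ∈ Cp, t (s * w) := by
        apply Finset.sum_nbij' (fun w => s * w) (fun w => s * w)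
        · intro w hw
          rw [hCmdef, Finset.mem_filter] at hw
          obtain ⟨hwC, hwlt⟩ := hw
          obtain ⟨hmem, e1, e2, _⟩ := hmemC w hwC
          rw [hCpdef, Finset.mem_filter]
          refine ⟨hmem, ?_⟩
          rw [e1, e2]
          exact lt_of_le_of_ne (not_lt.mp hwlt) (Ne.symm (hppne w))
        · intro w hw
          rw [hCpdef, Finset.mem_filter] at hw
          obtain ⟨hwC, hwlt⟩ := hw
          obtain ⟨hmem, e1, e2, _⟩ := hmemC w hwC
          rw [hCmdef, Finset.mem_filter]
          refine ⟨hmem, ?_⟩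
          rw [e1, e2]
          exact not_lt.mpr (le_of_lt hwlt)
        · intro w hw
          exact (hmemC w (by rw [hCmdef] at hw; exact Finset.mem_of_mem_filter w hw)).2.2.2
        · intro w hw
          exact (hmemC w (by rw [hCpdef] at hw; exact Finset.mem_of_mem_filter w hw)).2.2.2
        · intro w hw
          rw [(hmemC w (by rw [hCmdef] at hw; exact Finset.mem_of_mem_filter w hw)).2.2.2]
      rw [hsplit, hbij, ← Finset.sum_add_distrib, map_sum]
      apply Finset.sum_congr rfl
      intro w hw
      rw [hCpdef, Finset.mem_filter] at hw
      obtain ⟨hwC, hwlt⟩ := hw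
      have hlen : lenPerm (s * w) = lenPerm w + 1 := lenPerm_swap_mul hk w hwlt
      have hlens : lenPerm s = 1 := lenPerm_swap_adj hk
      have hHsw : Hop (s * w) f = Hop s (Hop w f) :=
        hmul s w (by rw [hlen, hlens]; omega) f
      have hcoef : ((lenPerm w0 : ℤ) - (lenPerm w : ℤ))
          = ((lenPerm w0 : ℤ) - (lenPerm (s * w) : ℤ)) + 1 := by
        rw [hlen]; push_cast; ring
      have hterm : t w + t (s * w)
          = qq ((lenPerm w0 : ℤ) - (lenPerm (s * w) : ℤ))
              * (qq 1 * Hop w f + Hop s (Hop w f)) := by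
        show qq ((lenPerm w0 : ℤ) - (lenPerm w : ℤ)) * Hop w f
            + qq ((lenPerm w0 : ℤ) - (lenPerm (s * w) : ℤ)) * Hop (s * w) f = _
        rw [hHsw, hcoef, ← qq_mul]
        ring
      rw [hterm, map_mul, permAut_qq, DL_pair hkane (hdl k hk) (Hop w f)]
    rw [hB, hC]
  -- now reduce the general case to adjacent swaps
  have gen : ∀ N : ℕ, ∀ π : Equiv.Perm (Fin (a + b)), lenPerm π ≤ N → permAut π F = F := by
    intro N
    induction N with
    | zero =>
      intro π hπ
      rcases eq_or_ne π 1 with rfl | hne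
      · exact permAut_one F
      · obtain ⟨k, hk, hd⟩ := exists_descent hne
        have := lenPerm_mul_swap_descent hk π hd
        omega
    | succ N ih =>
      intro π hπ
      rcases eq_or_ne π 1 with rfl | hne
      · exact permAut_one F
      · have hinv : π⁻¹ ≠ 1 := fun h => hne (by rwa [inv_eq_one] at h)
        obtain ⟨k, hk, hd⟩ := exists_descent hinv
        set s := Equiv.swap (⟨k, Nat.lt_of_succ_lt hk⟩ : Fin (a+b)) ⟨k+1, hk⟩ with hsdef
        have hlen : lenPerm π = lenPerm (s * π) + 1 := lenPerm_swap_mul_descent hk π hd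
        set π' := s * π with hπ'def
        have hsp : s * π' = π := by rw [hπ'def, ← mul_assoc, hsdef, Equiv.swap_mul_self, one_mul]
        calc permAut π F = permAut (s * π') F := by rw [hsp]
          _ = permAut π' (permAut s F) := (permAut_comp π' s F).symm
          _ = permAut π' F := by rw [key k hk]
          _ = F := ih π' (by omega)
  intro π
  exact gen (lenPerm π) π le_rfl
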